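/- Let a = −7/8 + i·√15/8. The 15×15 complex matrix U₁₅, with rows and columns indexed by the nonzero vectors of the vector space F₂⁴ over the two-element field, defined by (U₁₅)_{x,y} = 1 if the standard bilinear form x·y = x₁y₁ + x₂y₂ + x₃y₃ + x₄y₄ equals 0 in F₂, and (U₁₅)_{x,y} = a if x·y = 1, is a complex Hadamard matrix of order 15. -/

import Mathlib

open Matrix Finset ComplexConjugate

/-- `H` is a complex Hadamard matrix: unimodular entries and `H Hᴴ = n • I`. -/
def IsCHadamard {n : Type*} [Fintype n] [DecidableEq n] (H : Matrix n n ℂ) : Prop :=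
  (∀ i j, ‖H i j‖ = 1) ∧
    H * H.conjTranspose = (Fintype.card n : ℂ) • 1

/-- The nonzero vectors of `F₂⁴`. -/
abbrev V15 : Type := {x : Fin 4 → ZMod 2 // x ≠ 0}

/-!
A nonzero `x ∈ F₂⁴` is orthogonal to 7 of the 15 nonzero vectors, and two distinct nonzero
`x, x'` are both orthogonal to exactly 3 of them; so the pairs `(x·y, x'·y)` take the values
`(0,0), (0,1), (1,0), (1,1)` with multiplicities `7, 0, 0, 8` if `x = x'` and `3, 4, 4, 4`
otherwise. Hence the rows of `U₁₅` have squared norm `7 + 8|a|² = 15`, and distinct rows have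
inner product `3 + 4(a + ā) + 4|a|² = 7 + 8 Re a`, which vanishes because `Re a = -7/8`.
-/

noncomputable def u15Entry : ℂ := -7/8 + Complex.I * (Real.sqrt 15 / 8)

lemma u15Entry_re : u15Entry.re = -7/8 := by
  simp [u15Entry]

lemma normSq_u15Entry : Complex.normSq u15Entry = 1 := by
  have h15 : Real.sqrt 15 ^ 2 = 15 := Real.sq_sqrt (by norm_num)
  rw [Complex.normSq_apply, u15Entry_re, show u15Entry.im = Real.sqrt 15 / 8 by simp [u15Entry]]
  nlinarith [h15]

lemma conj_u15Entry_add_u15Entry : conj u15Entry + u15Entry = -7/4 := by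
  rw [add_comm, Complex.add_conj, u15Entry_re]
  push_cast
  ring

lemma ite_one_mul_conj_ite_one (p q : Prop) [Decidable p] [Decidable q] (c : ℂ) :
    (if p then 1 else c) * conj (if q then 1 else c) =
      (if p ∧ q then 1 else 0) + (if p ∧ ¬q then conj c else 0) +
        (if ¬p ∧ q then c else 0) + (if ¬p ∧ ¬q then (Complex.normSq c : ℂ) else 0) := by
  by_cases hp : p <;> by_cases hq : q <;> simp [hp, hq, Complex.mul_conj]

lemma sum_ite_one_mul_conj_ite_one {ι : Type*} [Fintype ι] (p q : ι → Prop)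
    [DecidablePred p] [DecidablePred q] (c : ℂ) :
    ∑ y, (if p y then 1 else c) * conj (if q y then 1 else c) =
      #{y | p y ∧ q y} + #{y | p y ∧ ¬q y} * conj c + #{y | ¬p y ∧ q y} * c +
        #{y | ¬p y ∧ ¬q y} * (Complex.normSq c : ℂ) := by
  simp only [ite_one_mul_conj_ite_one, sum_add_distrib, ← sum_filter, sum_const, nsmul_eq_mul,
    mul_one]

lemma mul_conjTranspose_of_ite_one_apply {ι : Type*} [Fintype ι] (p : ι → ι → Prop)
    [∀ x y, Decidable (p x y)] (c : ℂ) (x x' : ι) :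
    (of (fun x y => if p x y then 1 else c) * (of fun x y => if p x y then 1 else c)ᴴ) x x' =
      #{y | p x y ∧ p x' y} + #{y | p x y ∧ ¬p x' y} * conj c + #{y | ¬p x y ∧ p x' y} * c +
        #{y | ¬p x y ∧ ¬p x' y} * (Complex.normSq c : ℂ) := by
  simp only [mul_apply, conjTranspose_apply, of_apply, Complex.star_def]
  exact sum_ite_one_mul_conj_ite_one (p x) (p x') c

lemma card_filter_dotProduct_V15 (x x' : V15) :
    #{y : V15 | x.1 ⬝ᵥ y.1 = 0 ∧ x'.1 ⬝ᵥ y.1 = 0} = (if x = x' then 7 else 3) ∧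
    #{y : V15 | x.1 ⬝ᵥ y.1 = 0 ∧ ¬x'.1 ⬝ᵥ y.1 = 0} = (if x = x' then 0 else 4) ∧
    #{y : V15 | ¬x.1 ⬝ᵥ y.1 = 0 ∧ x'.1 ⬝ᵥ y.1 = 0} = (if x = x' then 0 else 4) ∧
    #{y : V15 | ¬x.1 ⬝ᵥ y.1 = 0 ∧ ¬x'.1 ⬝ᵥ y.1 = 0} = (if x = x' then 8 else 4) := by
  revert x x'
  decide

theorem stmt17 (a : ℂ) (ha : a = -7/8 + Complex.I * (Real.sqrt 15 / 8)) :
    IsCHadamard (Matrix.of fun x y : V15 =>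
      if ∑ i, x.1 i * y.1 i = 0 then (1 : ℂ) else a) := by
  change a = u15Entry at ha
  subst ha
  show IsCHadamard (of fun x y : V15 => if x.1 ⬝ᵥ y.1 = 0 then 1 else u15Entry)
  have hnorm : ‖u15Entry‖ = 1 := by rw [Complex.norm_def, normSq_u15Entry, Real.sqrt_one]
  refine ⟨fun x y => by dsimp only [of_apply]; split_ifs <;> simp [hnorm], ?_⟩
  ext x x'
  obtain ⟨h00, h01, h10, h11⟩ := card_filter_dotProduct_V15 x x'
  have hcard : Fintype.card V15 = 15 := by decide
  rw [mul_conjTranspose_of_ite_one_apply, h00, h01, h10, h11, normSq_u15Entry, Complex.ofReal_one,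
    hcard, Matrix.smul_apply, one_apply]
  by_cases hxx : x = x'
  · simp only [hxx, if_true]
    norm_num
  · simp only [hxx, if_false]
    linear_combination 4 * conj_u15Entry_add_u15Entry
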